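/- (Lemma 3.2(i)) Suppose X_⋆ is Hermitian and there exists a Hermitian X_T with R_{X_T} invertible, ρ(T̂_{X_T}) < 1, and C_{T_{X_T}}(X_⋆) ≥ H_{X_T}. Then for every Hermitian X_P with R_{X_P} positive definite and X_P ≤ R(X_P), one has X_⋆ ≥ X_P; consequently R_{X_⋆} is positive definite. -/

import Mathlib

/-!
Put `Δ = X⋆ - X_P` and `T = T_{X_T}`. Completing the square around the gain `F_{X_P}` gives
`Tᴴ X̄_P T + H_{X_T} = R(X_P) + K(X_T, X_P)`, where `K(X_T, X_P) ≥ 0` because `R_{X_P} > 0`;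
hence `C_T(Δ) = (C_T(X⋆) - H_{X_T}) + (R(X_P) - X_P) + K(X_T, X_P) ≥ 0`. Adding
`Tᴴ conj(C_T(Δ)) T ≥ 0` turns this into the ordinary Stein inequality `Δ - T̂ᴴ Δ T̂ ≥ 0`;
iterating it, `Δ ≥ (T̂ᵏ)ᴴ Δ T̂ᵏ → 0` since `ρ(T̂) < 1`. Finally `R_{X⋆} = R_{X_P} + Bᴴ Δ̄ B > 0`.
-/

open Matrix Filter Topology
open scoped ComplexOrder

noncomputable section

namespace CDARE

variable {n m : ℕ}

/-- Entrywise complex conjugate of a matrix. -/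
def mconj {p q : ℕ} (M : Matrix (Fin p) (Fin q) ℂ) : Matrix (Fin p) (Fin q) ℂ :=
  M.map (starRingEnd ℂ)

/-- `hatM M = conj M * M`. -/
def hatM (M : Matrix (Fin n) (Fin n) ℂ) : Matrix (Fin n) (Fin n) ℂ := mconj M * M

/-- `R_X = R + Bᴴ X̄ B`. -/
def RX (R : Matrix (Fin m) (Fin m) ℂ) (B : Matrix (Fin n) (Fin m) ℂ)
    (X : Matrix (Fin n) (Fin n) ℂ) : Matrix (Fin m) (Fin m) ℂ :=
  R + Bᴴ * mconj X * B

/-- `F_X = R_X⁻¹ Bᴴ X̄ A`. -/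
def FX (A : Matrix (Fin n) (Fin n) ℂ) (B : Matrix (Fin n) (Fin m) ℂ)
    (R : Matrix (Fin m) (Fin m) ℂ) (X : Matrix (Fin n) (Fin n) ℂ) :
    Matrix (Fin m) (Fin n) ℂ :=
  (RX R B X)⁻¹ * (Bᴴ * mconj X * A)

/-- `T_X = A - B F_X`. -/
def TX (A : Matrix (Fin n) (Fin n) ℂ) (B : Matrix (Fin n) (Fin m) ℂ)
    (R : Matrix (Fin m) (Fin m) ℂ) (X : Matrix (Fin n) (Fin n) ℂ) :
    Matrix (Fin n) (Fin n) ℂ :=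
  A - B * FX A B R X

/-- The Riccati operator `R(X)`. -/
def Rop (A : Matrix (Fin n) (Fin n) ℂ) (B : Matrix (Fin n) (Fin m) ℂ)
    (R : Matrix (Fin m) (Fin m) ℂ) (H : Matrix (Fin n) (Fin n) ℂ)
    (X : Matrix (Fin n) (Fin n) ℂ) : Matrix (Fin n) (Fin n) ℂ :=
  Aᴴ * mconj X * A - Aᴴ * mconj X * B * (RX R B X)⁻¹ * (Bᴴ * mconj X * A) + H

/-- `H_X = H + F_Xᴴ R F_X`. -/
def HX (A : Matrix (Fin n) (Fin n) ℂ) (B : Matrix (Fin n) (Fin m) ℂ)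
    (R : Matrix (Fin m) (Fin m) ℂ) (H : Matrix (Fin n) (Fin n) ℂ)
    (X : Matrix (Fin n) (Fin n) ℂ) : Matrix (Fin n) (Fin n) ℂ :=
  H + (FX A B R X)ᴴ * R * FX A B R X

/-- `K(Y, X) = (F_Y - F_X)ᴴ R_X (F_Y - F_X)`. -/
def Kop (A : Matrix (Fin n) (Fin n) ℂ) (B : Matrix (Fin n) (Fin m) ℂ)
    (R : Matrix (Fin m) (Fin m) ℂ) (Y X : Matrix (Fin n) (Fin n) ℂ) :
    Matrix (Fin n) (Fin n) ℂ :=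
  (FX A B R Y - FX A B R X)ᴴ * RX R B X * (FX A B R Y - FX A B R X)

/-- Conjugate Stein operator `C_C(X) = X - Cᴴ X̄ C`. -/
def CStein (C X : Matrix (Fin n) (Fin n) ℂ) : Matrix (Fin n) (Fin n) ℂ :=
  X - Cᴴ * mconj X * C

/-- The set `S_≥`. -/
def Sge (A : Matrix (Fin n) (Fin n) ℂ) (B : Matrix (Fin n) (Fin m) ℂ)
    (R : Matrix (Fin m) (Fin m) ℂ) (H : Matrix (Fin n) (Fin n) ℂ) :
    Set (Matrix (Fin n) (Fin n) ℂ) :=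
  {X | X.IsHermitian ∧ ∃ XT : Matrix (Fin n) (Fin n) ℂ, XT.IsHermitian ∧
      IsUnit (RX R B XT) ∧ spectralRadius ℂ (hatM (TX A B R XT)) < 1 ∧
      (CStein (TX A B R XT) X - HX A B R H XT).PosSemidef}

theorem tendsto_pow_atTop_nhds_zero_of_spectralRadius_lt_one {𝔸 : Type*} [NormedRing 𝔸]
    [NormedAlgebra ℂ 𝔸] [CompleteSpace 𝔸] {a : 𝔸} (h : spectralRadius ℂ a < 1) :
    Tendsto (fun k : ℕ => a ^ k) atTop (𝓝 0) := by
  obtain ⟨r, hρr, hr1⟩ := ENNReal.lt_iff_exists_nnreal_btwn.mp h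
  have hroot : ∀ᶠ k : ℕ in atTop, ((‖a ^ k‖₊ : ENNReal) ^ (1 / (k : ℝ))) < r :=
    (spectrum.pow_nnnorm_pow_one_div_tendsto_nhds_spectralRadius a).eventually_lt_const hρr
  have hbound : ∀ᶠ k : ℕ in atTop, ‖a ^ k‖ ≤ (r : ℝ) ^ k := by
    filter_upwards [hroot, eventually_ge_atTop 1] with k hk hk1
    have hk0 : (k : ℝ) ≠ 0 := by positivity
    have hpow := ENNReal.rpow_le_rpow hk.le (Nat.cast_nonneg k)
    rw [← ENNReal.rpow_mul, one_div, inv_mul_cancel₀ hk0, ENNReal.rpow_one, ENNReal.rpow_natCast,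
      ← ENNReal.coe_pow, ENNReal.coe_le_coe] at hpow
    exact_mod_cast hpow
  exact squeeze_zero_norm' hbound
    (tendsto_pow_atTop_nhds_zero_of_lt_one r.coe_nonneg (by exact_mod_cast hr1))

section Stein

variable {ι : Type*} [Fintype ι] [DecidableEq ι]

theorem tendsto_pow_atTop_nhds_zero_of_spectralRadius_lt_one_matrix {S : Matrix ι ι ℂ}
    (h : spectralRadius ℂ S < 1) : Tendsto (fun k : ℕ => S ^ k) atTop (𝓝 0) :=
  letI := Matrix.linftyOpNormedRing (n := ι) (α := ℂ)
  letI := Matrix.linftyOpNormedAlgebra (n := ι) (R := ℂ) (α := ℂ)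
  tendsto_pow_atTop_nhds_zero_of_spectralRadius_lt_one h

theorem posSemidef_sub_pow_conjTranspose_mul_mul_pow {S Δ : Matrix ι ι ℂ}
    (h : (Δ - Sᴴ * Δ * S).PosSemidef) (k : ℕ) :
    (Δ - (S ^ k)ᴴ * Δ * S ^ k).PosSemidef := by
  induction k with
  | zero => simpa using PosSemidef.zero
  | succ k ih =>
    have htelescope : Δ - (S ^ (k + 1))ᴴ * Δ * S ^ (k + 1)
        = (Δ - Sᴴ * Δ * S) + Sᴴ * (Δ - (S ^ k)ᴴ * Δ * S ^ k) * S := by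
      simp only [pow_succ, conjTranspose_mul, Matrix.mul_sub, Matrix.sub_mul, Matrix.mul_assoc]
      abel
    rw [htelescope]
    exact h.add (ih.conjTranspose_mul_mul_same S)

theorem posSemidef_of_posSemidef_sub_conjTranspose_mul_mul {S Δ : Matrix ι ι ℂ}
    (hΔ : Δ.IsHermitian) (hS : spectralRadius ℂ S < 1) (h : (Δ - Sᴴ * Δ * S).PosSemidef) :
    Δ.PosSemidef := by
  refine PosSemidef.of_dotProduct_mulVec_nonneg hΔ fun v => ?_
  set q : Matrix ι ι ℂ → ℂ := fun M => star (M *ᵥ v) ⬝ᵥ (Δ *ᵥ (M *ᵥ v))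
  have hq : Continuous q := by
    unfold q
    fun_prop
  have hq0 : q 0 = 0 := by simp [q]
  have hlim : Tendsto (fun k : ℕ => q (S ^ k)) atTop (𝓝 0) := hq0 ▸
    (hq.tendsto 0).comp (tendsto_pow_atTop_nhds_zero_of_spectralRadius_lt_one_matrix hS)
  refine le_of_tendsto' hlim fun k => sub_nonneg.mp ?_
  have hk := (posSemidef_sub_pow_conjTranspose_mul_mul_pow h k).dotProduct_mulVec_nonneg v
  have hform : star v ⬝ᵥ (((S ^ k)ᴴ * Δ * S ^ k) *ᵥ v) = q (S ^ k) := by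
    rw [← Matrix.mulVec_mulVec, ← Matrix.mulVec_mulVec, Matrix.dotProduct_mulVec,
      ← Matrix.star_mulVec]
  rwa [Matrix.sub_mulVec, dotProduct_sub, hform] at hk

end Stein

section Mconj

variable {p q r : ℕ}

lemma mconj_mul (M : Matrix (Fin p) (Fin q) ℂ) (N : Matrix (Fin q) (Fin r) ℂ) :
    mconj (M * N) = mconj M * mconj N :=
  Matrix.map_mul

lemma mconj_sub (M N : Matrix (Fin p) (Fin q) ℂ) : mconj (M - N) = mconj M - mconj N :=
  Matrix.map_sub _ (map_sub _) M N

lemma mconj_mconj (M : Matrix (Fin p) (Fin q) ℂ) : mconj (mconj M) = M := by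
  ext i j; simp [mconj]

lemma mconj_conjTranspose (M : Matrix (Fin p) (Fin q) ℂ) : mconj Mᴴ = (mconj M)ᴴ := by
  ext i j; simp [mconj, conjTranspose_apply]

lemma mconj_eq_transpose {M : Matrix (Fin n) (Fin n) ℂ} (hM : M.IsHermitian) :
    mconj M = Mᵀ := by
  ext i j; simpa [mconj] using congrFun (congrFun hM j) i

lemma isHermitian_mconj {M : Matrix (Fin n) (Fin n) ℂ} (hM : M.IsHermitian) :
    (mconj M).IsHermitian := by
  rw [mconj_eq_transpose hM]; exact hM.transpose

lemma posSemidef_mconj {M : Matrix (Fin n) (Fin n) ℂ} (hM : M.PosSemidef) :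
    (mconj M).PosSemidef := by
  rw [mconj_eq_transpose hM.1]; exact hM.transpose

end Mconj

lemma CStein_sub (T X Y : Matrix (Fin n) (Fin n) ℂ) :
    CStein T (X - Y) = CStein T X - CStein T Y := by
  simp only [CStein, mconj_sub, Matrix.mul_sub, Matrix.sub_mul]
  abel

lemma CStein_add_conjTranspose_mul_mconj_CStein_mul (T X : Matrix (Fin n) (Fin n) ℂ) :
    CStein T X + Tᴴ * mconj (CStein T X) * T = X - (hatM T)ᴴ * X * hatM T := by
  simp only [CStein, hatM, mconj_sub, mconj_mul, mconj_conjTranspose, mconj_mconj,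
    conjTranspose_mul, Matrix.mul_sub, Matrix.sub_mul, Matrix.mul_assoc]
  abel

theorem posSemidef_of_CStein_posSemidef {T X : Matrix (Fin n) (Fin n) ℂ} (hX : X.IsHermitian)
    (hT : spectralRadius ℂ (hatM T) < 1) (h : (CStein T X).PosSemidef) : X.PosSemidef := by
  refine posSemidef_of_posSemidef_sub_conjTranspose_mul_mul hX hT ?_
  rw [← CStein_add_conjTranspose_mul_mconj_CStein_mul]
  exact h.add ((posSemidef_mconj h).conjTranspose_mul_mul_same T)

section Riccati

variable (A : Matrix (Fin n) (Fin n) ℂ) (B : Matrix (Fin n) (Fin m) ℂ)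
  (R : Matrix (Fin m) (Fin m) ℂ) (H : Matrix (Fin n) (Fin n) ℂ)

lemma RX_eq_RX_add (X Y : Matrix (Fin n) (Fin n) ℂ) :
    RX R B X = RX R B Y + Bᴴ * mconj (X - Y) * B := by
  simp only [RX, mconj_sub, Matrix.mul_sub, Matrix.sub_mul]
  abel

lemma posSemidef_Kop {X : Matrix (Fin n) (Fin n) ℂ} (hX : (RX R B X).PosSemidef)
    (Y : Matrix (Fin n) (Fin n) ℂ) : (Kop A B R Y X).PosSemidef :=
  hX.conjTranspose_mul_mul_same _

variable {X : Matrix (Fin n) (Fin n) ℂ}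

lemma RX_mul_FX (hunit : IsUnit (RX R B X)) :
    RX R B X * FX A B R X = Bᴴ * mconj X * A :=
  Matrix.mul_nonsing_inv_cancel_left _ _ ((Matrix.isUnit_iff_isUnit_det _).mp hunit)

lemma conjTranspose_FX_mul_RX (hX : X.IsHermitian) (hRX : (RX R B X).IsHermitian)
    (hunit : IsUnit (RX R B X)) :
    (FX A B R X)ᴴ * RX R B X = Aᴴ * mconj X * B := by
  conv_lhs => rw [← hRX.eq, ← conjTranspose_mul, RX_mul_FX A B R hunit]
  simp only [conjTranspose_mul, conjTranspose_conjTranspose, (isHermitian_mconj hX).eq,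
    Matrix.mul_assoc]

lemma Rop_eq (hX : X.IsHermitian) (hRX : (RX R B X).IsHermitian) (hunit : IsUnit (RX R B X)) :
    Rop A B R H X = Aᴴ * mconj X * A - (FX A B R X)ᴴ * RX R B X * FX A B R X + H := by
  rw [Rop, ← conjTranspose_FX_mul_RX A B R hX hRX hunit, Matrix.mul_assoc (_ * _) (RX R B X)⁻¹]
  rfl

lemma conjTranspose_TX_mul_mconj_mul_TX_add_HX (hX : X.IsHermitian)
    (hRX : (RX R B X).IsHermitian) (hunit : IsUnit (RX R B X)) (Y : Matrix (Fin n) (Fin n) ℂ) :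
    (TX A B R Y)ᴴ * mconj X * TX A B R Y + HX A B R H Y = Rop A B R H X + Kop A B R Y X := by
  have hBA : Bᴴ * (mconj X * A) = RX R B X * FX A B R X := by
    rw [← Matrix.mul_assoc, RX_mul_FX A B R hunit]
  have hAB : Aᴴ * (mconj X * B) = (FX A B R X)ᴴ * RX R B X := by
    rw [← Matrix.mul_assoc, conjTranspose_FX_mul_RX A B R hX hRX hunit]
  have hBB : Bᴴ * (mconj X * B) = RX R B X - R := by
    rw [RX, ← Matrix.mul_assoc]
    abel
  have hABF : Aᴴ * (mconj X * (B * FX A B R Y)) = (FX A B R X)ᴴ * (RX R B X * FX A B R Y) := by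
    rw [← Matrix.mul_assoc (mconj X), ← Matrix.mul_assoc Aᴴ, hAB, Matrix.mul_assoc]
  have hBBF : Bᴴ * (mconj X * (B * FX A B R Y)) = (RX R B X - R) * FX A B R Y := by
    rw [← Matrix.mul_assoc (mconj X), ← Matrix.mul_assoc Bᴴ, hBB]
  rw [Rop_eq A B R H hX hRX hunit, TX, HX, Kop]
  simp only [conjTranspose_sub, conjTranspose_mul, Matrix.sub_mul, Matrix.mul_sub,
    Matrix.mul_assoc, hBA, hABF, hBBF]
  abel

end Riccati

theorem lemma_3_2_i_general (n m : ℕ) (A : Matrix (Fin n) (Fin n) ℂ) (B : Matrix (Fin n) (Fin m) ℂ)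
    (R : Matrix (Fin m) (Fin m) ℂ) (H : Matrix (Fin n) (Fin n) ℂ)
    (Xstar : Matrix (Fin n) (Fin n) ℂ) (hXstar : Xstar.IsHermitian)
    (hS : ∃ XT : Matrix (Fin n) (Fin n) ℂ, XT.IsHermitian ∧ IsUnit (RX R B XT) ∧
      spectralRadius ℂ (hatM (TX A B R XT)) < 1 ∧
      (CStein (TX A B R XT) Xstar - HX A B R H XT).PosSemidef) :
    ∀ XP : Matrix (Fin n) (Fin n) ℂ, XP.IsHermitian → (RX R B XP).PosDef →
      (Rop A B R H XP - XP).PosSemidef →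
      (Xstar - XP).PosSemidef ∧ (RX R B Xstar).PosDef := by
  intro XP hXP hRXP hRic
  obtain ⟨XT, -, -, hρ, hC⟩ := hS
  have hsquare := conjTranspose_TX_mul_mconj_mul_TX_add_HX A B R H hXP hRXP.isHermitian
    hRXP.isUnit XT
  have hCStein : CStein (TX A B R XT) (Xstar - XP) = (CStein (TX A B R XT) Xstar - HX A B R H XT)
      + ((Rop A B R H XP - XP) + Kop A B R XT XP) := by
    rw [CStein_sub, sub_add_eq_add_sub (Rop A B R H XP), ← hsquare]
    simp only [CStein]
    abel
  have hD : (Xstar - XP).PosSemidef := by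
    refine posSemidef_of_CStein_posSemidef (hXstar.sub hXP) hρ ?_
    rw [hCStein]
    exact hC.add (hRic.add (posSemidef_Kop A B R hRXP.posSemidef XT))
  refine ⟨hD, ?_⟩
  rw [RX_eq_RX_add B R Xstar XP]
  exact hRXP.add_posSemidef ((posSemidef_mconj hD).conjTranspose_mul_mul_same B)

/-- Lemma 3.2(i): any `X_⋆ ∈ S_≥` dominates every `X_P ∈ R_≤ ∩ ℙ`, and consequently
`R_{X_⋆}` is positive definite. -/
theorem lemma_3_2_i (n m : ℕ) (A : Matrix (Fin n) (Fin n) ℂ) (B : Matrix (Fin n) (Fin m) ℂ)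
    (R : Matrix (Fin m) (Fin m) ℂ) (H : Matrix (Fin n) (Fin n) ℂ)
    (hR : R.IsHermitian) (hRunit : IsUnit R) (hH : H.IsHermitian)
    (Xstar : Matrix (Fin n) (Fin n) ℂ) (hXstar : Xstar.IsHermitian)
    (hS : ∃ XT : Matrix (Fin n) (Fin n) ℂ, XT.IsHermitian ∧ IsUnit (RX R B XT) ∧
      spectralRadius ℂ (hatM (TX A B R XT)) < 1 ∧
      (CStein (TX A B R XT) Xstar - HX A B R H XT).PosSemidef) :
    ∀ XP : Matrix (Fin n) (Fin n) ℂ, XP.IsHermitian → (RX R B XP).PosDef →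
      (Rop A B R H XP - XP).PosSemidef →
      (Xstar - XP).PosSemidef ∧ (RX R B Xstar).PosDef :=
  lemma_3_2_i_general n m A B R H Xstar hXstar hS

end CDARE
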